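/- Let Z = (U; V) and Z' = (U'; V') be pairs of factor matrices with U, U' ∈ ℝ^{n₁×r}, V, V' ∈ ℝ^{n₂×r}. Let d = d_P(Z, Z') be the Procrustes distance and a = √2 · max{σ₁(U), σ₁(V)} · d + d²/2. Then ‖U' V'ᵀ − U Vᵀ‖_F ≤ a. -/

import Mathlib

open Matrix

/-- Frobenius norm of a real matrix. -/
noncomputable def frob {m n : Type*} [Fintype m] [Fintype n] (A : Matrix m n ℝ) : ℝ :=
  Real.sqrt (∑ i, ∑ j, (A i j) ^ 2)

/-- Largest singular value (ℓ²-operator norm) of a real matrix. -/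
noncomputable def sigmaMax {m n : Type*} [Fintype m] [Fintype n] (A : Matrix m n ℝ) : ℝ :=
  sSup {c | ∃ x : n → ℝ, Real.sqrt (∑ j, (x j) ^ 2) = 1 ∧
    c = Real.sqrt (∑ i, (A.mulVec x i) ^ 2)}

/-- Smallest singular value of a real matrix (minimum of ‖Ax‖ over unit vectors x). -/
noncomputable def sigmaMin {m n : Type*} [Fintype m] [Fintype n] (A : Matrix m n ℝ) : ℝ :=
  sInf {c | ∃ x : n → ℝ, Real.sqrt (∑ j, (x j) ^ 2) = 1 ∧
    c = Real.sqrt (∑ i, (A.mulVec x i) ^ 2)}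

/-- The k-th largest singular value of a real matrix (Courant–Fischer max-min). -/
noncomputable def sigmaI {m n : Type*} [Fintype m] [Fintype n] (A : Matrix m n ℝ) (k : ℕ) : ℝ :=
  sSup {c | ∃ S : Submodule ℝ (n → ℝ), Module.finrank ℝ S = k ∧
    c = sInf {d | ∃ x ∈ S, Real.sqrt (∑ j, (x j) ^ 2) = 1 ∧
      d = Real.sqrt (∑ i, (A.mulVec x i) ^ 2)}}

/-- Procrustes distance: infimum of ‖Z₁ − Z₂ P‖_F over orthogonal P. -/
noncomputable def dP {N r : Type*} [Fintype N] [Fintype r] [DecidableEq r]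
    (Z₁ Z₂ : Matrix N r ℝ) : ℝ :=
  sInf {c | ∃ P : Matrix r r ℝ, Pᵀ * P = 1 ∧ c = frob (Z₁ - Z₂ * P)}

/-- Maximum Euclidean row norm ‖A‖_{2,∞}. -/
noncomputable def rowNorm {m n : Type*} [Fintype m] [Fintype n] (A : Matrix m n ℝ) : ℝ :=
  ⨆ i, Real.sqrt (∑ j, (A i j) ^ 2)


section lemmas
variable {m n p : Type*} [Fintype m] [Fintype n] [Fintype p]

lemma frob_nonneg (A : Matrix m n ℝ) : 0 ≤ frob A := Real.sqrt_nonneg _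

lemma frob_sq (A : Matrix m n ℝ) : frob A ^ 2 = ∑ i, ∑ j, (A i j) ^ 2 := by
  rw [frob, Real.sq_sqrt]
  positivity

/-- frob as a Euclidean norm -/
noncomputable def toE (A : Matrix m n ℝ) : EuclideanSpace ℝ (m × n) :=
  (WithLp.equiv 2 _).symm (fun q : m × n => A q.1 q.2)

lemma frob_eq_norm (A : Matrix m n ℝ) : frob A = ‖toE A‖ := by
  rw [EuclideanSpace.norm_eq, frob]
  congr 1
  rw [Fintype.sum_prod_type]
  simp [toE, Real.norm_eq_abs, sq_abs]

lemma toE_add (A B : Matrix m n ℝ) : toE (A + B) = toE A + toE B := rfl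

lemma frob_add_le (A B : Matrix m n ℝ) : frob (A + B) ≤ frob A + frob B := by
  rw [frob_eq_norm, frob_eq_norm, frob_eq_norm, toE_add]
  exact norm_add_le _ _

lemma frob_neg (A : Matrix m n ℝ) : frob (-A) = frob A := by
  unfold frob; congr 1; simp

lemma frob_sub_comm (A B : Matrix m n ℝ) : frob (A - B) = frob (B - A) := by
  rw [← frob_neg (A - B), neg_sub]

/-- Cauchy-Schwarz style bound: ‖Ax‖ ≤ frob A * ‖x‖ -/
lemma mulVec_le_frob (A : Matrix m n ℝ) (x : n → ℝ) :
    Real.sqrt (∑ i, (A.mulVec x i) ^ 2) ≤ frob A * Real.sqrt (∑ j, (x j) ^ 2) := by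
  rw [frob, ← Real.sqrt_mul (by positivity), Finset.sum_mul]
  apply Real.sqrt_le_sqrt
  apply Finset.sum_le_sum
  intro i _
  exact Finset.sum_mul_sq_le_sq_mul_sq _ _ _

lemma sigmaMax_bddAbove (A : Matrix m n ℝ) :
    BddAbove {c | ∃ x : n → ℝ, Real.sqrt (∑ j, (x j) ^ 2) = 1 ∧
      c = Real.sqrt (∑ i, (A.mulVec x i) ^ 2)} := by
  refine ⟨frob A, ?_⟩
  rintro c ⟨x, hx, rfl⟩
  calc Real.sqrt (∑ i, (A.mulVec x i) ^ 2) ≤ frob A * Real.sqrt (∑ j, (x j) ^ 2) :=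
        mulVec_le_frob A x
    _ = frob A := by rw [hx, mul_one]

lemma sigmaMax_nonneg (A : Matrix m n ℝ) : 0 ≤ sigmaMax A := by
  rcases Set.eq_empty_or_nonempty {c | ∃ x : n → ℝ, Real.sqrt (∑ j, (x j) ^ 2) = 1 ∧
      c = Real.sqrt (∑ i, (A.mulVec x i) ^ 2)} with h | ⟨c, x, hx, hc⟩
  · rw [sigmaMax, h, Real.sSup_empty]
  · calc (0:ℝ) ≤ c := hc ▸ Real.sqrt_nonneg _
      _ ≤ sigmaMax A := le_csSup (sigmaMax_bddAbove A) ⟨x, hx, hc⟩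

lemma mulVec_le_sigmaMax (A : Matrix m n ℝ) (x : n → ℝ) :
    Real.sqrt (∑ i, (A.mulVec x i) ^ 2) ≤ sigmaMax A * Real.sqrt (∑ j, (x j) ^ 2) := by
  rcases eq_or_ne (∑ j, (x j) ^ 2) 0 with hs | hs
  · have hx : ∀ j, x j = 0 := by
      intro j
      have h := (Finset.sum_eq_zero_iff_of_nonneg (fun j _ => sq_nonneg (x j))).mp hs j
        (Finset.mem_univ j)
      exact pow_eq_zero_iff two_ne_zero |>.mp h
    have hx0 : x = 0 := funext hx
    rw [hx0]
    simp [Matrix.mulVec_zero]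
  · have hpos : 0 < ∑ j, (x j) ^ 2 := lt_of_le_of_ne (by positivity) (Ne.symm hs)
    have ht : 0 < Real.sqrt (∑ j, (x j) ^ 2) := Real.sqrt_pos.mpr hpos
    set t := Real.sqrt (∑ j, (x j) ^ 2) with htt
    set y := t⁻¹ • x with hy
    have hyn : Real.sqrt (∑ j, (y j) ^ 2) = 1 := by
      have h1 : ∑ j, (y j) ^ 2 = t⁻¹ ^ 2 * ∑ j, (x j) ^ 2 := by
        rw [Finset.mul_sum]
        congr 1; funext j
        simp [hy, mul_pow]
      rw [h1, Real.sqrt_mul (by positivity), Real.sqrt_sq (by positivity), ← htt,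
        inv_mul_cancel₀ ht.ne']
    have hxy : x = t • y := by
      rw [hy, smul_smul, mul_inv_cancel₀ ht.ne', one_smul]
    have hAx : Real.sqrt (∑ i, (A.mulVec x i) ^ 2)
        = t * Real.sqrt (∑ i, (A.mulVec y i) ^ 2) := by
      rw [hxy, Matrix.mulVec_smul]
      have : ∑ i, ((t • A.mulVec y) i) ^ 2 = t ^ 2 * ∑ i, (A.mulVec y i) ^ 2 := by
        rw [Finset.mul_sum]
        congr 1; funext i
        simp [mul_pow]
      rw [this, Real.sqrt_mul (by positivity), Real.sqrt_sq ht.le]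
    rw [hAx, mul_comm (sigmaMax A) t]
    exact mul_le_mul_of_nonneg_left
      (le_csSup (sigmaMax_bddAbove A) ⟨y, hyn, rfl⟩) ht.le

lemma sigmaMax_le_frob (A : Matrix m n ℝ) : sigmaMax A ≤ frob A := by
  rcases Set.eq_empty_or_nonempty {c | ∃ x : n → ℝ, Real.sqrt (∑ j, (x j) ^ 2) = 1 ∧
      c = Real.sqrt (∑ i, (A.mulVec x i) ^ 2)} with h | hne
  · rw [sigmaMax, h, Real.sSup_empty]; exact frob_nonneg A
  · apply csSup_le hne
    rintro c ⟨x, hx, rfl⟩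
    calc Real.sqrt (∑ i, (A.mulVec x i) ^ 2) ≤ frob A * Real.sqrt (∑ j, (x j) ^ 2) :=
          mulVec_le_frob A x
      _ = frob A := by rw [hx, mul_one]

/-- key: frob (A * Bᵀ) ≤ sigmaMax B * frob A -/
lemma frob_mul_transpose_le [DecidableEq n] (A : Matrix m n ℝ) (B : Matrix p n ℝ) :
    frob (A * Bᵀ) ≤ sigmaMax B * frob A := by
  have hrow : ∀ i, ∑ j, ((A * Bᵀ) i j) ^ 2 = ∑ j, (B.mulVec (A i) j) ^ 2 := by
    intro i
    congr 1; funext j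
    simp [Matrix.mul_apply, Matrix.mulVec, dotProduct, Matrix.transpose_apply, mul_comm]
  have hb : ∀ i, ∑ j, ((A * Bᵀ) i j) ^ 2 ≤ sigmaMax B ^ 2 * ∑ j, (A i j) ^ 2 := by
    intro i
    rw [hrow i]
    have h1 := mulVec_le_sigmaMax B (A i)
    have h2 : (0:ℝ) ≤ Real.sqrt (∑ j, (B.mulVec (A i) j) ^ 2) := Real.sqrt_nonneg _
    have h4 := pow_le_pow_left₀ h2 h1 2
    rwa [Real.sq_sqrt (by positivity), mul_pow, Real.sq_sqrt (by positivity)] at h4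
  rw [frob, frob]
  calc Real.sqrt (∑ i, ∑ j, ((A * Bᵀ) i j) ^ 2)
      ≤ Real.sqrt (∑ i, sigmaMax B ^ 2 * ∑ j, (A i j) ^ 2) := by
        apply Real.sqrt_le_sqrt; exact Finset.sum_le_sum fun i _ => hb i
    _ = sigmaMax B * Real.sqrt (∑ i, ∑ j, (A i j) ^ 2) := by
        rw [← Finset.mul_sum, Real.sqrt_mul (by positivity),
          Real.sqrt_sq (sigmaMax_nonneg B)]

lemma frob_transpose (A : Matrix m n ℝ) : frob Aᵀ = frob A := by
  unfold frob
  rw [Finset.sum_comm]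
  simp [Matrix.transpose_apply]

lemma frob_mul_transpose_le' [DecidableEq n] (A : Matrix m n ℝ) (B : Matrix p n ℝ) :
    frob (A * Bᵀ) ≤ sigmaMax A * frob B := by
  have : frob (A * Bᵀ) = frob (B * Aᵀ) := by
    rw [← frob_transpose (B * Aᵀ), Matrix.transpose_mul, Matrix.transpose_transpose]
  rw [this]
  exact frob_mul_transpose_le B A

lemma frob_mul_frob [DecidableEq n] (A : Matrix m n ℝ) (B : Matrix p n ℝ) :
    frob (A * Bᵀ) ≤ frob A * frob B := by
  calc frob (A * Bᵀ) ≤ sigmaMax A * frob B := frob_mul_transpose_le' A B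
    _ ≤ frob A * frob B := mul_le_mul_of_nonneg_right (sigmaMax_le_frob A) (frob_nonneg B)

end lemmas

lemma fromRows_sub' {m₁ m₂ n : Type*} (A C : Matrix m₁ n ℝ) (B D : Matrix m₂ n ℝ) :
    Matrix.fromRows A B - Matrix.fromRows C D = Matrix.fromRows (A - C) (B - D) := by
  ext i j
  cases i <;> simp [Matrix.sub_apply, Matrix.fromRows_apply_inl, Matrix.fromRows_apply_inr]

lemma frob_fromRows_sq {m₁ m₂ n : Type*} [Fintype m₁] [Fintype m₂] [Fintype n]
    (A : Matrix m₁ n ℝ) (B : Matrix m₂ n ℝ) :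
    frob (Matrix.fromRows A B) ^ 2 = frob A ^ 2 + frob B ^ 2 := by
  rw [frob_sq, frob_sq, frob_sq, Fintype.sum_sum_type]
  simp [Matrix.fromRows_apply_inl, Matrix.fromRows_apply_inr]

lemma arith1 (sU sV c a b s L : ℝ) (hU : sU ≤ c) (hV : sV ≤ c) (ha0 : 0 ≤ a) (hb0 : 0 ≤ b)
    (hs0 : 0 ≤ s) (hc0 : 0 ≤ c) (hs2 : s ^ 2 = a ^ 2 + b ^ 2)
    (hL : L ≤ sV * a + sU * b + a * b) : L ≤ Real.sqrt 2 * c * s + s ^ 2 / 2 := by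
  have h_ab : a + b ≤ Real.sqrt 2 * s := by
    have hq : (a + b) ^ 2 ≤ 2 * s ^ 2 := by nlinarith [sq_nonneg (a - b)]
    calc a + b = Real.sqrt ((a + b) ^ 2) := (Real.sqrt_sq (by linarith)).symm
      _ ≤ Real.sqrt (2 * s ^ 2) := Real.sqrt_le_sqrt hq
      _ = Real.sqrt 2 * s := by rw [Real.sqrt_mul (by norm_num), Real.sqrt_sq hs0]
  nlinarith [mul_le_mul_of_nonneg_right hV ha0, mul_le_mul_of_nonneg_right hU hb0,
    mul_le_mul_of_nonneg_left h_ab hc0, sq_nonneg (a - b)]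

lemma arith3 (L c x : ℝ) (hL0 : 0 ≤ L) (hc0 : 0 ≤ c) (hx0 : 0 ≤ x)
    (h : L ≤ Real.sqrt 2 * c * x + x ^ 2 / 2) :
    Real.sqrt (2 * L + 2 * c ^ 2) - Real.sqrt 2 * c ≤ x := by
  have hr2 : (Real.sqrt 2) ^ 2 = 2 := Real.sq_sqrt (by norm_num)
  have hr20 : 0 ≤ Real.sqrt 2 := Real.sqrt_nonneg 2
  have h3 : 2 * L + 2 * c ^ 2 ≤ (x + Real.sqrt 2 * c) ^ 2 := by nlinarith
  have h2 : Real.sqrt (2 * L + 2 * c ^ 2) ≤ x + Real.sqrt 2 * c := by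
    calc Real.sqrt (2 * L + 2 * c ^ 2) ≤ Real.sqrt ((x + Real.sqrt 2 * c) ^ 2) :=
          Real.sqrt_le_sqrt h3
      _ = x + Real.sqrt 2 * c := Real.sqrt_sq (by positivity)
  linarith

lemma arith2 (L c d : ℝ) (hL0 : 0 ≤ L) (hc0 : 0 ≤ c) (hd0 : 0 ≤ d)
    (h : Real.sqrt (2 * L + 2 * c ^ 2) - Real.sqrt 2 * c ≤ d) :
    L ≤ Real.sqrt 2 * c * d + d ^ 2 / 2 := by
  have hr2 : (Real.sqrt 2) ^ 2 = 2 := Real.sq_sqrt (by norm_num)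
  have hw2 : (Real.sqrt (2*L+2*c^2)) ^ 2 = 2*L+2*c^2 := Real.sq_sqrt (by positivity)
  have hw0 : 0 ≤ Real.sqrt (2*L+2*c^2) := Real.sqrt_nonneg _
  have hwd : Real.sqrt (2*L+2*c^2) ≤ d + Real.sqrt 2 * c := by linarith
  nlinarith [mul_self_le_mul_self hw0 hwd, hw2, hr2]

theorem product_diff_le (n₁ n₂ r : ℕ)
    (U U' : Matrix (Fin n₁) (Fin r) ℝ) (V V' : Matrix (Fin n₂) (Fin r) ℝ) :
    frob (U' * V'ᵀ - U * Vᵀ)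
      ≤ Real.sqrt 2 * max (sigmaMax U) (sigmaMax V) *
          dP (Matrix.fromRows U V) (Matrix.fromRows U' V') +
        dP (Matrix.fromRows U V) (Matrix.fromRows U' V') ^ 2 / 2 := by
  classical
  set Z := Matrix.fromRows U V with hZ
  set Z' := Matrix.fromRows U' V' with hZ'
  set c := max (sigmaMax U) (sigmaMax V) with hc
  have hc0 : 0 ≤ c := le_trans (sigmaMax_nonneg U) (le_max_left _ _)
  set L := frob (U' * V'ᵀ - U * Vᵀ) with hL
  have hL0 : 0 ≤ L := frob_nonneg _
  set S := {x | ∃ P : Matrix (Fin r) (Fin r) ℝ, Pᵀ * P = 1 ∧ x = frob (Z - Z' * P)} with hS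
  have hSne : S.Nonempty := ⟨frob (Z - Z' * 1), 1, by simp, rfl⟩
  clear_value L c
  have key : ∀ s ∈ S, L ≤ Real.sqrt 2 * c * s + s ^ 2 / 2 := by
    rintro s ⟨P, hP, rfl⟩
    set A := U' * P with hA
    set B := V' * P with hB
    have hPP : P * Pᵀ = 1 := mul_eq_one_comm.mp hP
    have hprod : U' * V'ᵀ = A * Bᵀ := by
      rw [hA, hB, Matrix.transpose_mul, Matrix.mul_assoc, ← Matrix.mul_assoc P, hPP,
        Matrix.one_mul]
    set E := A - U with hE
    set F := B - V with hF
    have hdec : U' * V'ᵀ - U * Vᵀ = E * Vᵀ + U * Fᵀ + E * Fᵀ := by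
      rw [hprod, hE, hF, Matrix.transpose_sub]
      simp only [Matrix.sub_mul, Matrix.mul_sub]
      abel
    set a := frob (U - A) with ha
    set b := frob (V - B) with hb
    have haE : frob E = a := by rw [hE, frob_sub_comm]
    have hbF : frob F = b := by rw [hF, frob_sub_comm]
    have ha0 : 0 ≤ a := by rw [ha]; exact frob_nonneg _
    have hb0 : 0 ≤ b := by rw [hb]; exact frob_nonneg _
    set s := frob (Z - Z' * P) with hs
    have hs0 : 0 ≤ s := frob_nonneg _
    have hfr : Z - Z' * P = Matrix.fromRows (U - A) (V - B) := by
      rw [hZ, hZ', Matrix.fromRows_mul, fromRows_sub', hA, hB]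
    have hs2 : s ^ 2 = a ^ 2 + b ^ 2 := by
      rw [hs, hfr, frob_fromRows_sq, ← ha, ← hb]
    have htri : L ≤ frob (E * Vᵀ) + frob (U * Fᵀ) + frob (E * Fᵀ) := by
      rw [hL, hdec]
      calc frob (E * Vᵀ + U * Fᵀ + E * Fᵀ) ≤ frob (E * Vᵀ + U * Fᵀ) + frob (E * Fᵀ) :=
            frob_add_le _ _
        _ ≤ frob (E * Vᵀ) + frob (U * Fᵀ) + frob (E * Fᵀ) := by
            linarith [frob_add_le (E * Vᵀ) (U * Fᵀ)]
    have h1 : frob (E * Vᵀ) ≤ sigmaMax V * a := by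
      have := frob_mul_transpose_le E V; rwa [haE] at this
    have h2 : frob (U * Fᵀ) ≤ sigmaMax U * b := by
      have := frob_mul_transpose_le' U F; rwa [hbF] at this
    have h3 : frob (E * Fᵀ) ≤ a * b := by
      have := frob_mul_frob E F; rwa [haE, hbF] at this
    clear_value A B E F a b s
    have hU : sigmaMax U ≤ c := (le_max_left _ _).trans_eq hc.symm
    have hV : sigmaMax V ≤ c := (le_max_right _ _).trans_eq hc.symm
    have hL' : L ≤ sigmaMax V * a + sigmaMax U * b + a * b :=
      htri.trans (add_le_add (add_le_add h1 h2) h3)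
    exact arith1 (sigmaMax U) (sigmaMax V) c a b s L hU hV ha0 hb0 hs0 hc0 hs2 hL'
  have hdS : dP Z Z' = sInf S := rfl
  set d := dP Z Z' with hd
  have hd0 : 0 ≤ d := by
    rw [hdS]
    apply le_csInf hSne
    rintro x ⟨P, hP, rfl⟩
    exact frob_nonneg _
  have hlb : ∀ x ∈ S, Real.sqrt (2 * L + 2 * c ^ 2) - Real.sqrt 2 * c ≤ x := by
    rintro x hx
    have hx0 : 0 ≤ x := by obtain ⟨P, hP, rfl⟩ := hx; exact frob_nonneg _
    exact arith3 L c x hL0 hc0 hx0 (key x hx)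
  have ht0d : Real.sqrt (2 * L + 2 * c ^ 2) - Real.sqrt 2 * c ≤ d := by
    rw [hdS]; exact le_csInf hSne hlb
  show L ≤ Real.sqrt 2 * c * d + d ^ 2 / 2
  exact arith2 L c d hL0 hc0 hd0 ht0d
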